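/- arXiv:2402.11686 — 8 statements merged into one kernel-verified Lean document; each statement's English description precedes it below -/
import Mathlib

section
/- Let O be a finite set of observation pairs over vertex set V. Two distinct vertices u, v are threshold-compatible with respect to O if and only if there exist threshold functions f_u, f_v depending only on the states of u and v such that for every (C, C') ∈ O, f_u(C(u), C(v)) = C'(u) and f_v(C(u), C(v)) = C'(v). -/
/-- score of configuration C on the pair {u,v}. -/
def pairScore (n : ℕ) (C : Fin n → Bool) (u v : Fin n) : ℕ :=
  (if C u then 1 else 0) + (if C v then 1 else 0)

lemma exists_threshold {α : Type*} [DecidableEq α] (O : Finset α) (s : α → ℕ) (g : α → Bool)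
    (mono : ∀ p ∈ O, ∀ q ∈ O, s p ≤ s q → g p ≤ g q) :
    ∃ τ : ℕ, ∀ p ∈ O, decide (τ ≤ s p) = g p := by
  classical
  by_cases h : (O.filter (fun p => g p = true)).Nonempty
  · obtain ⟨q, hq⟩ := h
    have hq' := Finset.mem_filter.mp hq
    refine ⟨((O.filter (fun p => g p = true)).image s).min'
      (Finset.Nonempty.image ⟨q, hq⟩ s), fun p hp => ?_⟩
    set τ := ((O.filter (fun p => g p = true)).image s).min'
      (Finset.Nonempty.image ⟨q, hq⟩ s) with hτ
    obtain ⟨r, hr, hrs⟩ := Finset.mem_image.mp (Finset.min'_mem _ (Finset.Nonempty.image ⟨q, hq⟩ s))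
    have hr' := Finset.mem_filter.mp hr
    cases hg : g p
    · simp only [decide_eq_false_iff_not, not_le]
      by_contra h'
      push_neg at h'
      have := mono r hr'.1 p hp (hrs.trans_le h')
      rw [hr'.2, hg] at this
      exact absurd this (by simp)
    · simp only [decide_eq_true_eq]
      exact Finset.min'_le _ _ (Finset.mem_image.mpr ⟨p, Finset.mem_filter.mpr ⟨hp, hg⟩, rfl⟩)
  · refine ⟨O.sup s + 1, fun p hp => ?_⟩
    have hg : g p = false := by
      by_contra h'
      exact h ⟨p, Finset.mem_filter.mpr ⟨hp, by simpa using h'⟩⟩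
    rw [hg]
    simp only [decide_eq_false_iff_not, not_le]
    exact Nat.lt_succ_of_le (Finset.le_sup hp)

/-- u,v are threshold-compatible w.r.t. O iff there exist threshold functions of the pair
{u,v} reproducing the observed next states of u and of v on every observation. -/
theorem stmt3 (n : ℕ) (O : Finset ((Fin n → Bool) × (Fin n → Bool)))
    (u v : Fin n) (huv : u ≠ v) :
    (∀ p ∈ O, ∀ q ∈ O, pairScore n p.1 u v ≤ pairScore n q.1 u v →
        p.2 u ≤ q.2 u ∧ p.2 v ≤ q.2 v) ↔
      ∃ τu τv : ℕ, ∀ p ∈ O,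
        (decide (τu ≤ pairScore n p.1 u v) = p.2 u) ∧
        (decide (τv ≤ pairScore n p.1 u v) = p.2 v) := by
  classical
  constructor
  · intro h
    obtain ⟨τu, hu⟩ := exists_threshold O (fun p => pairScore n p.1 u v) (fun p => p.2 u)
      (fun p hp q hq hs => (h p hp q hq hs).1)
    obtain ⟨τv, hv⟩ := exists_threshold O (fun p => pairScore n p.1 u v) (fun p => p.2 v)
      (fun p hp q hq hs => (h p hp q hq hs).2)
    exact ⟨τu, τv, fun p hp => ⟨hu p hp, hv p hp⟩⟩
  · rintro ⟨τu, τv, h⟩ p hp q hq hs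
    obtain ⟨hpu, hpv⟩ := h p hp
    obtain ⟨hqu, hqv⟩ := h q hq
    constructor
    · rw [← hpu, ← hqu]
      exact Bool.le_iff_imp.mpr (by simp only [decide_eq_true_eq]; exact fun h' => h'.trans hs)
    · rw [← hpv, ← hqv]
      exact Bool.le_iff_imp.mpr (by simp only [decide_eq_true_eq]; exact fun h' => h'.trans hs)
end

section
/- There exists a perfect-matching threshold SyDS on vertex set V consistent with observation set O if and only if the threshold-compatibility graph of O (on vertex set V, with an edge between each threshold-compatible pair) contains a perfect matching. -/
/-- score of configuration C on the pair {u,v}. -/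
def pScore (n : ℕ) (C : Fin n → Bool) (u v : Fin n) : ℕ :=
  (if C u then 1 else 0) + (if C v then 1 else 0)

/-- u and v are threshold-compatible with respect to the observation set O. -/
def thrCompat (n : ℕ) (O : Finset ((Fin n → Bool) × (Fin n → Bool))) (u v : Fin n) : Prop :=
  ∀ p ∈ O, ∀ q ∈ O, pScore n p.1 u v ≤ pScore n q.1 u v →
    p.2 u ≤ q.2 u ∧ p.2 v ≤ q.2 v

/-- There is a perfect-matching threshold SyDS consistent with O iff the
threshold-compatibility graph of O contains a perfect matching (encoded as a
fixed-point-free involution m matching every vertex to a compatible partner). -/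
theorem stmt4 (n : ℕ) (O : Finset ((Fin n → Bool) × (Fin n → Bool))) :
    (∃ (m : Fin n → Fin n) (τ : Fin n → ℕ),
        (∀ v, m v ≠ v ∧ m (m v) = v) ∧
        ∀ p ∈ O, ∀ v, (decide (τ v ≤ pScore n p.1 v (m v)) = p.2 v)) ↔
      ∃ m : Fin n → Fin n, (∀ v, m v ≠ v ∧ m (m v) = v) ∧
        ∀ v, thrCompat n O v (m v) := by
  constructor
  · rintro ⟨m, τ, hm, hcon⟩
    refine ⟨m, hm, fun v p hp q hq hle => ?_⟩
    have h1 := hcon p hp v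
    have h2 := hcon q hq v
    have h1' := hcon p hp (m v)
    have h2' := hcon q hq (m v)
    rw [(hm v).2] at h1' h2'
    have hsym : ∀ C : Fin n → Bool, pScore n C (m v) v = pScore n C v (m v) := by
      intro C; simp [pScore, Nat.add_comm]
    rw [hsym] at h1' h2'
    constructor
    · rw [← h1, ← h2]
      by_cases h : τ v ≤ pScore n p.1 v (m v)
      · simp [h, h.trans hle]
      · simp [h]
    · rw [← h1', ← h2']
      by_cases h : τ (m v) ≤ pScore n p.1 v (m v)
      · simp [h, h.trans hle]
      · simp [h]
  · rintro ⟨m, hm, hcomp⟩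
    classical
    refine ⟨m, fun v => if h : (O.filter (fun p => p.2 v = true)).Nonempty
        then (O.filter (fun p => p.2 v = true)).inf' h (fun p => pScore n p.1 v (m v))
        else 3, hm, ?_⟩
    intro p hp v
    by_cases hpv : p.2 v = true
    · rw [hpv]
      have hne : (O.filter fun q => q.2 v = true).Nonempty :=
        ⟨p, Finset.mem_filter.2 ⟨hp, hpv⟩⟩
      simp only [dif_pos hne, decide_eq_true_eq]
      exact Finset.inf'_le _ (Finset.mem_filter.2 ⟨hp, hpv⟩)
    · have hpv' : p.2 v = false := by simpa using hpv
      rw [hpv', decide_eq_false_iff_not]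
      intro hle2
      by_cases hne : (O.filter fun q => q.2 v = true).Nonempty
      · simp only [dif_pos hne] at hle2
        obtain ⟨q, hq, hqeq⟩ :=
          Finset.exists_mem_eq_inf' hne (fun p => pScore n p.1 v (m v))
        rw [hqeq] at hle2
        obtain ⟨hqO, hqv⟩ := Finset.mem_filter.1 hq
        have htle := (hcomp v q hqO p hp hle2).1
        rw [hqv] at htle
        exact hpv (le_antisymm (Bool.le_true _) htle)
      · simp only [dif_neg hne] at hle2
        have hsc : pScore n p.1 v (m v) ≤ 2 := by
          unfold pScore; split <;> split <;> omega
        omega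
end

section
/- There exists a directed threshold SyDS with maximum in-degree at most Δ consistent with observation set O if and only if every vertex v is threshold-consistent with O via some vertex set N_v ⊆ V \ {v} of cardinality at most Δ. -/
/-- score(C,S): number of state-1 vertices of S in C. -/
def scoreOn (n : ℕ) (C : Fin n → Bool) (S : Finset (Fin n)) : ℕ :=
  (S.filter fun u => C u = true).card

lemma scoreOn_le (n : ℕ) (C : Fin n → Bool) (S : Finset (Fin n)) :
    scoreOn n C S ≤ n := by
  calc scoreOn n C S ≤ S.card := Finset.card_le_card (Finset.filter_subset _ _)
  _ ≤ Fintype.card (Fin n) := Finset.card_le_univ _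
  _ = n := Fintype.card_fin n

/-- There is a directed threshold SyDS with in-degree ≤ Δ consistent with O iff every
vertex is threshold-consistent with O via some in-neighborhood of size ≤ Δ. -/
theorem stmt6 (n Δ : ℕ) (O : Finset ((Fin n → Bool) × (Fin n → Bool))) :
    (∃ (N : Fin n → Finset (Fin n)) (τ : Fin n → ℕ),
        (∀ v, v ∉ N v ∧ (N v).card ≤ Δ) ∧
        ∀ p ∈ O, ∀ v, (p.2 v = true ↔ τ v ≤ scoreOn n p.1 (insert v (N v)))) ↔
      ∀ v : Fin n, ∃ Y : Finset (Fin n), v ∉ Y ∧ Y.card ≤ Δ ∧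
        ∀ p ∈ O, ∀ q ∈ O, p.2 v < q.2 v →
          scoreOn n p.1 (insert v Y) < scoreOn n q.1 (insert v Y) := by
  classical
  constructor
  · rintro ⟨N, τ, hN, hO⟩ v
    refine ⟨N v, (hN v).1, (hN v).2, ?_⟩
    intro p hp q hq hlt
    rw [Bool.lt_iff] at hlt
    obtain ⟨hpf, hqt⟩ := hlt
    have hq' := (hO q hq v).1 hqt
    have hp' : ¬ τ v ≤ scoreOn n p.1 (insert v (N v)) := by
      intro hc
      have := (hO p hp v).2 hc
      simp [hpf] at this
    omega
  · intro h
    choose Y hvY hcard hY using h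
    set S : Fin n → Finset ℕ := fun v =>
      (O.filter fun q => q.2 v = true).image (fun q => scoreOn n q.1 (insert v (Y v))) with hS
    refine ⟨Y, fun v => if hne : (S v).Nonempty then (S v).min' hne else n + 1,
      fun v => ⟨hvY v, hcard v⟩, ?_⟩
    intro p hp v
    by_cases hpv : p.2 v = true
    · have hmem : scoreOn n p.1 (insert v (Y v)) ∈ S v :=
        Finset.mem_image.2 ⟨p, Finset.mem_filter.2 ⟨hp, hpv⟩, rfl⟩
      have hne : (S v).Nonempty := ⟨_, hmem⟩
      simp only [hpv, dif_pos hne, true_iff]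
      exact Finset.min'_le _ _ hmem
    · have hpf : p.2 v = false := Bool.eq_false_iff.2 hpv
      rw [hpf]
      simp only [Bool.false_eq_true, false_iff, not_le]
      by_cases hne : (S v).Nonempty
      · rw [dif_pos hne]
        have hmem := (S v).min'_mem hne
        obtain ⟨q, hq, hqeq⟩ := Finset.mem_image.1 hmem
        obtain ⟨hqO, hqt⟩ := Finset.mem_filter.1 hq
        have hlt : p.2 v < q.2 v := by
          rw [Bool.lt_iff]
          exact ⟨Bool.eq_false_iff.2 (by simp [hpv]), hqt⟩
        have h2 := hY v p hp q hqO hlt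
        omega
      · rw [dif_neg hne]
        have := scoreOn_le n p.1 (insert v (Y v))
        omega
end

section
/- If a vertex v satisfies ℓ(v, N⁺(G_obs, v)) > h(v, N⁺(G_obs, v)) (strict inequality), then no threshold SyDS whose graph is obtained from G_obs by adding at most one edge incident to v can be consistent with the observation set O. -/
/-!
A threshold rule at `v` separates the two kinds of observations: every configuration with
`C'(v) = 0` has score below `τ`, every configuration with `C'(v) = 1` has score at least `τ`.
Adding one edge `{u, v}` moves each score by at most one, so the scores on the observed
neighbourhood still satisfy `score(C₀) < τ ≤ score(C₁) + 1`, i.e. `score(C₀) ≤ score(C₁)` for every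
such pair. Hence `ℓ ≤ h`; the defaults `-1` and `n + 1` of the empty cases fit because scores lie
in `[0, n]`.
-/

/-- score(C,S) as an integer. -/
def scoreZ (n : ℕ) (C : Fin n → Bool) (S : Finset (Fin n)) : ℤ :=
  ((S.filter fun u => C u = true).card : ℤ)

theorem Finset.unbotD_max_le_untopD_min {α : Type*} [LinearOrder α] {s t : Finset α} {d e : α}
    (hd : ∀ y ∈ t, d ≤ y) (he : ∀ x ∈ s, x ≤ e) (hde : d ≤ e)
    (hst : ∀ x ∈ s, ∀ y ∈ t, x ≤ y) : s.max.unbotD d ≤ t.min.untopD e := by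
  rw [WithTop.le_untopD_iff fun _ ↦
    (WithBot.unbotD_le_iff fun _ ↦ hde).2 (Finset.max_le fun x hx ↦ WithBot.coe_le_coe.2 (he x hx))]
  refine Finset.le_min fun y hy ↦ WithTop.coe_le_coe.2 ?_
  exact (WithBot.unbotD_le_iff fun _ ↦ hd y hy).2
    (Finset.max_le fun x hx ↦ WithBot.coe_le_coe.2 (hst x hx y hy))

section scoreZ

variable {n : ℕ} (C : Fin n → Bool) (S : Finset (Fin n))

theorem scoreZ_nonneg : 0 ≤ scoreZ n C S := Int.natCast_nonneg _

theorem scoreZ_le : scoreZ n C S ≤ n := by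
  simpa [scoreZ] using Finset.card_le_univ (S.filter fun u ↦ C u = true)

theorem scoreZ_le_scoreZ_insert (u : Fin n) : scoreZ n C S ≤ scoreZ n C (insert u S) := by
  unfold scoreZ
  exact_mod_cast Finset.card_le_card (Finset.filter_subset_filter _ (Finset.subset_insert u S))

theorem scoreZ_insert_le (u : Fin n) : scoreZ n C (insert u S) ≤ scoreZ n C S + 1 := by
  unfold scoreZ
  rw [Finset.filter_insert]
  split_ifs
  · exact_mod_cast Finset.card_insert_le _ _
  · omega

theorem scoreZ_le_of_insert_lt_le {C₀ C₁ : Fin n → Bool} {u : Fin n} {τ : ℤ}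
    (h₀ : scoreZ n C₀ (insert u S) < τ) (h₁ : τ ≤ scoreZ n C₁ (insert u S)) :
    scoreZ n C₀ S ≤ scoreZ n C₁ S := by
  linarith [scoreZ_le_scoreZ_insert C₀ S u, scoreZ_insert_le C₁ S u]

end scoreZ

/-- If ℓ(v,N⁺(G_obs,v)) > h(v,N⁺(G_obs,v)) strictly, then no threshold SyDS whose graph
adds at most one edge incident to v to G_obs can be consistent with O at v. -/
theorem stmt9 (n : ℕ) (G : SimpleGraph (Fin n)) [DecidableRel G.Adj]
    (O : Finset ((Fin n → Bool) × (Fin n → Bool))) (v : Fin n) :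
    letI Y := insert v (G.neighborFinset v)
    letI O0 := O.filter fun p => p.2 v = false
    letI O1 := O.filter fun p => p.2 v = true
    letI l : ℤ := WithBot.unbotD (-1) ((O0.image fun p => scoreZ n p.1 Y).max)
    letI h : ℤ := WithTop.untopD (n + 1) ((O1.image fun p => scoreZ n p.1 Y).min)
    h < l →
      ∀ u : Fin n, ¬ ∃ τ : ℤ, ∀ p ∈ O,
        (p.2 v = true ↔ τ ≤ scoreZ n p.1 (insert u Y)) := by
  intro hlt u ⟨τ, hτ⟩
  refine hlt.not_ge (Finset.unbotD_max_le_untopD_min ?_ ?_ (by omega) ?_)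
  · simp only [Finset.mem_image]
    rintro _ ⟨p, -, rfl⟩
    exact (scoreZ_nonneg p.1 _).trans' (by norm_num)
  · simp only [Finset.mem_image]
    rintro _ ⟨p, -, rfl⟩
    exact (scoreZ_le p.1 _).trans (by omega)
  · simp only [Finset.mem_image, Finset.mem_filter]
    rintro _ ⟨p₀, ⟨hp₀, hv₀⟩, rfl⟩ _ ⟨p₁, ⟨hp₁, hv₁⟩, rfl⟩
    refine scoreZ_le_of_insert_lt_le _ (u := u) (τ := τ) ?_ ((hτ p₁ hp₁).1 hv₁)
    exact lt_of_not_ge fun hle ↦ by simp [(hτ p₀ hp₀).2 hle] at hv₀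
end

section
/- With the edge weights of the previous construction (weight t for edges with one endpoint in V', weight 2t+1 for edges with both endpoints in V', |V'| = t ≥ 1), any maximum-weight matching M maximizes the number of covered vertices of V', and among matchings covering that many V'-vertices, M uses the minimum possible number of edges. -/
/-- M is a matching within edge set E. -/
def IsMatching (n : ℕ) (E M : Finset (Fin n × Fin n)) : Prop :=
  M ⊆ E ∧ ∀ e ∈ M, ∀ e' ∈ M, e ≠ e' →
    e.1 ≠ e'.1 ∧ e.1 ≠ e'.2 ∧ e.2 ≠ e'.1 ∧ e.2 ≠ e'.2

/-- Number of matching edges with exactly one endpoint in V'. -/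
def e1 (n : ℕ) (V' : Finset (Fin n)) (M : Finset (Fin n × Fin n)) : ℕ :=
  (M.filter fun e => (e.1 ∈ V' ∧ e.2 ∉ V') ∨ (e.1 ∉ V' ∧ e.2 ∈ V')).card

/-- Number of matching edges with both endpoints in V'. -/
def e2 (n : ℕ) (V' : Finset (Fin n)) (M : Finset (Fin n × Fin n)) : ℕ :=
  (M.filter fun e => e.1 ∈ V' ∧ e.2 ∈ V').card

/-- Weight of a matching: t per edge with one endpoint in V', 2t+1 per edge with both. -/
def wt (n : ℕ) (V' : Finset (Fin n)) (M : Finset (Fin n × Fin n)) : ℕ :=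
  V'.card * e1 n V' M + (2 * V'.card + 1) * e2 n V' M

/-- Number of V'-vertices covered by M. -/
def cov (n : ℕ) (V' : Finset (Fin n)) (M : Finset (Fin n × Fin n)) : ℕ :=
  (V'.filter fun x => ∃ e ∈ M, e.1 = x ∨ e.2 = x).card

lemma filter_not_both (n : ℕ) (E : Finset (Fin n × Fin n)) (V' : Finset (Fin n))
    (hE : ∀ e ∈ E, e.1 ≠ e.2 ∧ (e.1 ∈ V' ∨ e.2 ∈ V'))
    (M : Finset (Fin n × Fin n)) (hM : IsMatching n E M) :
    M.filter (fun e => ¬(e.1 ∈ V' ∧ e.2 ∈ V')) =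
      M.filter (fun e => (e.1 ∈ V' ∧ e.2 ∉ V') ∨ (e.1 ∉ V' ∧ e.2 ∈ V')) := by
  apply Finset.filter_congr
  intro e he
  have := (hE e (hM.1 he)).2
  constructor <;> intro h <;> tauto

lemma card_eq_e1_add_e2 (n : ℕ) (E : Finset (Fin n × Fin n)) (V' : Finset (Fin n))
    (hE : ∀ e ∈ E, e.1 ≠ e.2 ∧ (e.1 ∈ V' ∨ e.2 ∈ V'))
    (M : Finset (Fin n × Fin n)) (hM : IsMatching n E M) :
    M.card = e1 n V' M + e2 n V' M := by
  have h := Finset.card_filter_add_card_filter_not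
    (s := M) (p := fun e => e.1 ∈ V' ∧ e.2 ∈ V')
  rw [filter_not_both n E V' hE M hM] at h
  unfold e1 e2
  omega

lemma cov_eq (n : ℕ) (E : Finset (Fin n × Fin n)) (V' : Finset (Fin n))
    (hE : ∀ e ∈ E, e.1 ≠ e.2 ∧ (e.1 ∈ V' ∨ e.2 ∈ V'))
    (M : Finset (Fin n × Fin n)) (hM : IsMatching n E M) :
    cov n V' M = e1 n V' M + 2 * e2 n V' M := by
  have hset : V'.filter (fun x => ∃ e ∈ M, e.1 = x ∨ e.2 = x) =
      M.biUnion (fun e => V'.filter fun x => e.1 = x ∨ e.2 = x) := by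
    ext x
    simp only [Finset.mem_filter, Finset.mem_biUnion]
    aesop
  have hdisj : ∀ e ∈ M, ∀ e' ∈ M, e ≠ e' →
      Disjoint (V'.filter fun x => e.1 = x ∨ e.2 = x)
        (V'.filter fun x => e'.1 = x ∨ e'.2 = x) := by
    intro e he e' he' hne
    have h := hM.2 e he e' he' hne
    rw [Finset.disjoint_left]
    intro x hx hx'
    simp only [Finset.mem_filter] at hx hx'
    rcases hx.2 with h1 | h1 <;> rcases hx'.2 with h2 | h2 <;> subst h1 <;> tauto
  have hcard : ∀ e ∈ M, (V'.filter fun x => e.1 = x ∨ e.2 = x).card =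
      (if e.1 ∈ V' then 1 else 0) + (if e.2 ∈ V' then 1 else 0) := by
    intro e he
    have hne := (hE e (hM.1 he)).1
    have : (V'.filter fun x => e.1 = x ∨ e.2 = x) =
        (V'.filter fun x => e.1 = x) ∪ (V'.filter fun x => e.2 = x) := by
      rw [← Finset.filter_or]
    rw [this, Finset.card_union_of_disjoint]
    · have h1 : (V'.filter fun x => e.1 = x) = if e.1 ∈ V' then {e.1} else ∅ :=
        Finset.filter_eq V' e.1
      have h2 : (V'.filter fun x => e.2 = x) = if e.2 ∈ V' then {e.2} else ∅ :=
        Finset.filter_eq V' e.2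
      rw [h1, h2]
      split_ifs <;> simp
    · rw [Finset.disjoint_left]
      intro x hx hx'
      simp only [Finset.mem_filter] at hx hx'
      exact hne (hx.2.trans hx'.2.symm)
  unfold cov
  rw [hset, Finset.card_biUnion hdisj]
  have hsplit := Finset.sum_filter_add_sum_filter_not M (fun e => e.1 ∈ V' ∧ e.2 ∈ V')
    (fun e => (V'.filter fun x => e.1 = x ∨ e.2 = x).card)
  rw [filter_not_both n E V' hE M hM] at hsplit
  have hb : ∑ e ∈ M.filter (fun e => e.1 ∈ V' ∧ e.2 ∈ V'),
      (V'.filter fun x => e.1 = x ∨ e.2 = x).card = 2 * e2 n V' M := by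
    rw [Finset.sum_congr rfl (fun e he => ?_), Finset.sum_const, smul_eq_mul, mul_comm]
    · rfl
    · have h := Finset.mem_filter.mp he
      rw [hcard e h.1]
      simp [h.2.1, h.2.2]
  have ha : ∑ e ∈ M.filter (fun e => (e.1 ∈ V' ∧ e.2 ∉ V') ∨ (e.1 ∉ V' ∧ e.2 ∈ V')),
      (V'.filter fun x => e.1 = x ∨ e.2 = x).card = e1 n V' M := by
    rw [Finset.sum_congr rfl (fun e he => ?_), Finset.sum_const, smul_eq_mul, mul_one]
    · rfl
    · have h := Finset.mem_filter.mp he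
      rw [hcard e h.1]
      rcases h.2 with ⟨h1, h2⟩ | ⟨h1, h2⟩ <;> simp [h1, h2]
  omega

/-- A maximum-weight matching maximizes the number of covered V'-vertices, and among
matchings covering that many V'-vertices it uses the fewest edges. -/
theorem stmt11 (n : ℕ) (E : Finset (Fin n × Fin n)) (V' : Finset (Fin n))
    (ht : 1 ≤ V'.card)
    (hE : ∀ e ∈ E, e.1 ≠ e.2 ∧ (e.1 ∈ V' ∨ e.2 ∈ V'))
    (M : Finset (Fin n × Fin n)) (hM : IsMatching n E M)
    (hmax : ∀ M', IsMatching n E M' → wt n V' M' ≤ wt n V' M) :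
    (∀ M', IsMatching n E M' → cov n V' M' ≤ cov n V' M) ∧
    (∀ M', IsMatching n E M' → cov n V' M' = cov n V' M → M.card ≤ M'.card) := by
  set t := V'.card with hT
  have key : ∀ M', IsMatching n E M' →
      wt n V' M' + M'.card = t * cov n V' M' + cov n V' M' ∧
      M'.card ≤ cov n V' M' ∧ cov n V' M' ≤ t := by
    intro M' hM'
    have hc := card_eq_e1_add_e2 n E V' hE M' hM'
    have hcv := cov_eq n E V' hE M' hM'
    refine ⟨?_, by omega, Finset.card_filter_le _ _⟩
    unfold wt
    rw [hc, hcv]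
    ring
  constructor
  · intro M' hM'
    by_contra h
    push_neg at h
    obtain ⟨k1, k2, k3⟩ := key M hM
    obtain ⟨k1', k2', k3'⟩ := key M' hM'
    have hw := hmax M' hM'
    have hmul : t * (cov n V' M + 1) ≤ t * cov n V' M' :=
      Nat.mul_le_mul_left t h
    rw [Nat.mul_add, Nat.mul_one] at hmul
    -- case on whether M is empty
    rcases Nat.eq_zero_or_pos M.card with h0 | h0
    · have hcov0 : cov n V' M = 0 := by omega
      have hwt0 : wt n V' M = 0 := by omega
      have : t * cov n V' M' = 0 := by omega
      have : cov n V' M' = 0 := by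
        rcases Nat.mul_eq_zero.mp this with h' | h' <;> omega
      omega
    · linarith
  · intro M' hM' hcv
    obtain ⟨k1, _, _⟩ := key M hM
    obtain ⟨k1', _, _⟩ := key M' hM'
    have hw := hmax M' hM'
    rw [hcv] at k1'
    omega
end

section
/- Partition an n-element vertex set V into Y of size floor(n/2) and Z of size ceil(n/2). Let R be the set of all configurations with exactly one state-1 vertex in Y and exactly one state-1 vertex in Z (so |R| = floor(n/2)·ceil(n/2) = floor(n²/4)). Define g_1(C) to keep the Y-states of C and zero out Z, and g_2(C) to be the all-zero configuration. Then for every subset R' ⊆ R there is a threshold SyDS S on V (namely, with bipartite graph between Y and Z containing edge (y,z) iff some configuration of R' has y and z both in state 1, threshold 2 for every vertex of Y and threshold 3 for every vertex of Z) such that S(C) = g_1(C) for all C ∈ R' and S(C) = g_2(C) for all C ∈ R \ R'. -/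
open scoped Classical

/-- Successor function of a threshold SyDS: vertex v becomes 1 iff the number of state-1
vertices in its closed neighborhood is at least τ v. -/
noncomputable def succF (n : ℕ) (G : SimpleGraph (Fin n)) (τ : Fin n → ℕ)
    (C : Fin n → Bool) : Fin n → Bool :=
  fun v => decide (τ v ≤ (Finset.univ.filter fun u => (u = v ∨ G.Adj v u) ∧ C u = true).card)

/-!
On a configuration of `R = onePerSide Y` with its two ones at `y ∈ Y` and `z ∉ Y`, every closed
neighbourhood sees at most two ones, so the threshold `3` on `Z` is never reached. A vertex
`v ∈ Y` sees the one at `y` only if `v = y` (the graph is bipartite) and the one at `z` iff `v z`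
is an edge, so it reaches threshold `2` iff `v = y` and `y z` is an edge. Since a configuration
of `R` is determined by its two ones, `y z` is an edge iff the configuration itself lies in `R'`.
-/

section Configurations

variable {α : Type*} [Fintype α] [DecidableEq α]

def onePerSide (Y : Finset α) : Set (α → Bool) :=
  {C | (Y.filter fun u => C u = true).card = 1 ∧ (Yᶜ.filter fun u => C u = true).card = 1}

variable {Y : Finset α} {C C' : α → Bool} {y z : α}

theorem exists_pair_of_mem_onePerSide (hC : C ∈ onePerSide Y) :
    ∃ y ∈ Y, ∃ z ∉ Y, C y = true ∧ C z = true := by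
  obtain ⟨y, hy⟩ := Finset.card_pos.mp (hC.1 ▸ Nat.one_pos)
  obtain ⟨z, hz⟩ := Finset.card_pos.mp (hC.2 ▸ Nat.one_pos)
  rw [Finset.mem_filter] at hy hz
  exact ⟨y, hy.1, z, Finset.mem_compl.mp hz.1, hy.2, hz.2⟩

theorem eq_true_iff_of_mem_onePerSide (hC : C ∈ onePerSide Y) (hy : y ∈ Y) (hz : z ∉ Y)
    (hCy : C y = true) (hCz : C z = true) (u : α) : C u = true ↔ u = y ∨ u = z := by
  refine ⟨fun hCu => ?_, by rintro (rfl | rfl) <;> assumption⟩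
  by_cases hu : u ∈ Y
  · exact .inl <| Finset.card_le_one.mp hC.1.le u (Finset.mem_filter.mpr ⟨hu, hCu⟩) y
      (Finset.mem_filter.mpr ⟨hy, hCy⟩)
  · exact .inr <| Finset.card_le_one.mp hC.2.le u
      (Finset.mem_filter.mpr ⟨Finset.mem_compl.mpr hu, hCu⟩) z
      (Finset.mem_filter.mpr ⟨Finset.mem_compl.mpr hz, hCz⟩)

theorem eq_of_mem_onePerSide_of_apply_eq_true (hC : C ∈ onePerSide Y)
    (hC' : C' ∈ onePerSide Y) (hy : y ∈ Y) (hz : z ∉ Y) (hCy : C y = true) (hCz : C z = true)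
    (hC'y : C' y = true) (hC'z : C' z = true) : C = C' := by
  funext u
  rw [Bool.eq_iff_iff, eq_true_iff_of_mem_onePerSide hC hy hz hCy hCz,
    eq_true_iff_of_mem_onePerSide hC' hy hz hC'y hC'z]

end Configurations

theorem Finset.two_le_card_iff_of_subset_pair {α : Type*} [DecidableEq α] {s : Finset α}
    {a b : α} (hab : a ≠ b) (hs : s ⊆ {a, b}) : 2 ≤ s.card ↔ a ∈ s ∧ b ∈ s := by
  refine ⟨fun h2 => ?_, fun ⟨ha, hb⟩ => ?_⟩
  · have hs_eq := Finset.eq_of_subset_of_card_le hs (Finset.card_le_two.trans h2)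
    simp [hs_eq]
  · calc 2 = ({a, b} : Finset α).card := (Finset.card_pair hab).symm
      _ ≤ s.card :=
        Finset.card_le_card (Finset.insert_subset ha (Finset.singleton_subset_iff.mpr hb))

section Shattering

variable {n : ℕ} {Y : Finset (Fin n)} {R' : Set (Fin n → Bool)}

def shatterGraph (Y : Finset (Fin n)) (R' : Set (Fin n → Bool)) : SimpleGraph (Fin n) :=
  SimpleGraph.fromRel fun y z =>
    ((y ∈ Y ∧ z ∉ Y) ∨ (z ∈ Y ∧ y ∉ Y)) ∧ ∃ C ∈ R', C y = true ∧ C z = true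

def shatterThreshold (Y : Finset (Fin n)) : Fin n → ℕ := fun v => if v ∈ Y then 2 else 3

theorem shatterGraph_adj {a b : Fin n} :
    (shatterGraph Y R').Adj a b ↔
      (a ∈ Y ↔ b ∉ Y) ∧ ∃ C ∈ R', C a = true ∧ C b = true := by
  simp only [shatterGraph, SimpleGraph.fromRel_adj]
  constructor
  · rintro ⟨-, ⟨hside, hC⟩ | ⟨hside, C, hC, hCb, hCa⟩⟩
    · exact ⟨by tauto, hC⟩
    · exact ⟨by tauto, C, hC, hCa, hCb⟩
  · rintro ⟨hside, hC⟩
    refine ⟨fun hab => ?_, .inl ⟨by tauto, hC⟩⟩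
    subst hab
    tauto

theorem shatterGraph_adj_iff_mem (hR' : R' ⊆ onePerSide Y) {C : Fin n → Bool}
    (hC : C ∈ onePerSide Y) {y z : Fin n} (hy : y ∈ Y) (hz : z ∉ Y) (hCy : C y = true)
    (hCz : C z = true) : (shatterGraph Y R').Adj y z ↔ C ∈ R' := by
  rw [shatterGraph_adj]
  refine ⟨fun ⟨_, C', hC', hC'y, hC'z⟩ => ?_, fun hCR' => ⟨by tauto, C, hCR', hCy, hCz⟩⟩
  rwa [eq_of_mem_onePerSide_of_apply_eq_true hC (hR' hC') hy hz hCy hCz hC'y hC'z]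

theorem succF_shatter_apply (hR' : R' ⊆ onePerSide Y) {C : Fin n → Bool}
    (hC : C ∈ onePerSide Y) (v : Fin n) :
    succF n (shatterGraph Y R') (shatterThreshold Y) C v =
      decide (v ∈ Y ∧ C v = true ∧ C ∈ R') := by
  obtain ⟨y, hy, z, hz, hCy, hCz⟩ := exists_pair_of_mem_onePerSide hC
  have hsupp := eq_true_iff_of_mem_onePerSide hC hy hz hCy hCz
  have hyz : y ≠ z := by rintro rfl; exact hz hy
  set s := Finset.univ.filter fun u => (u = v ∨ (shatterGraph Y R').Adj v u) ∧ C u = true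
  have hs : s ⊆ {y, z} := fun u hu => by simpa using (hsupp u).mp (Finset.mem_filter.mp hu).2.2
  refine Bool.decide_congr ?_
  change shatterThreshold Y v ≤ s.card ↔ _
  by_cases hv : v ∈ Y
  · have hy_mem : y ∈ s ↔ v = y := by
      have hvy : ¬ (shatterGraph Y R').Adj v y := fun h => by simp [shatterGraph_adj, hv, hy] at h
      simp only [s, Finset.mem_filter, Finset.mem_univ, true_and, hCy, and_true, hvy, or_false]
      exact eq_comm
    have hz_mem : z ∈ s ↔ (shatterGraph Y R').Adj v z := by
      have hzv : z ≠ v := by rintro rfl; exact hz hv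
      simp [s, hCz, hzv]
    rw [shatterThreshold, if_pos hv, Finset.two_le_card_iff_of_subset_pair hyz hs, hy_mem,
      hz_mem, hsupp v]
    by_cases hvy : v = y
    · subst hvy
      simp [hv, shatterGraph_adj_iff_mem hR' hC hv hz hCy hCz]
    · simp [hvy, show v ≠ z by rintro rfl; exact hz hv]
  · have : s.card ≤ 2 := (Finset.card_le_card hs).trans Finset.card_le_two
    simp only [shatterThreshold, hv, if_false, false_and, iff_false]
    omega

end Shattering

theorem stmt15_general (n : ℕ) (Y : Finset (Fin n))
    (R' : Set (Fin n → Bool))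
    (hR' : R' ⊆ {C | (Y.filter fun u => C u = true).card = 1 ∧
                     (Yᶜ.filter fun u => C u = true).card = 1}) :
    letI G : SimpleGraph (Fin n) := SimpleGraph.fromRel fun y z =>
      ((y ∈ Y ∧ z ∉ Y) ∨ (z ∈ Y ∧ y ∉ Y)) ∧ ∃ C ∈ R', C y = true ∧ C z = true
    letI τ : Fin n → ℕ := fun v => if v ∈ Y then 2 else 3
    (∀ C ∈ R', succF n G τ C = fun v => if v ∈ Y then C v else false) ∧
    (∀ C, ((Y.filter fun u => C u = true).card = 1 ∧
           (Yᶜ.filter fun u => C u = true).card = 1) → C ∉ R' →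
        succF n G τ C = fun _ => false) := by
  refine ⟨fun C hCR' => funext fun v => ?_, fun C hC hCR' => funext fun v => ?_⟩
  · refine (succF_shatter_apply hR' (hR' hCR') v).trans ?_
    by_cases hv : v ∈ Y <;> simp [hv, hCR']
  · refine (succF_shatter_apply hR' hC v).trans ?_
    simp [hCR']

/-- The shattering construction: for every subset R' of the set R of configurations with
exactly one state-1 vertex in Y and one in Z = Yᶜ, the threshold SyDS with the bipartite
graph joining y,z iff some C ∈ R' has both in state 1, threshold 2 on Y and 3 on Z, maps
each C ∈ R' to g₁(C) (keep Y-states, zero out Z) and each C ∈ R \ R' to g₂(C) = 0. -/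
theorem stmt15 (n : ℕ) (Y : Finset (Fin n)) (hY : Y.card = n / 2)
    (R' : Set (Fin n → Bool))
    (hR' : R' ⊆ {C | (Y.filter fun u => C u = true).card = 1 ∧
                     (Yᶜ.filter fun u => C u = true).card = 1}) :
    letI G : SimpleGraph (Fin n) := SimpleGraph.fromRel fun y z =>
      ((y ∈ Y ∧ z ∉ Y) ∨ (z ∈ Y ∧ y ∉ Y)) ∧ ∃ C ∈ R', C y = true ∧ C z = true
    letI τ : Fin n → ℕ := fun v => if v ∈ Y then 2 else 3
    (∀ C ∈ R', succF n G τ C = fun v => if v ∈ Y then C v else false) ∧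
    (∀ C, ((Y.filter fun u => C u = true).card = 1 ∧
           (Yᶜ.filter fun u => C u = true).card = 1) → C ∉ R' →
        succF n G τ C = fun _ => false) :=
  stmt15_general n Y R' hR'
end

section
/- The Natarajan dimension of the hypothesis class of threshold SyDSs over undirected graphs on n labeled vertices is at least floor(n²/4). -/
/-!
Split the vertices into a part `A` and its complement and take `R` to be the configurations in
which exactly one vertex `i ∈ A` and one vertex `j ∉ A` are on; there are `#A * #Aᶜ` of them,
which is `⌊n²/4⌋` for `#A = ⌊n/2⌋`. Given `R' ⊆ R`, join `i` and `j` exactly when the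
configuration of `{i, j}` lies in `R'`, and give threshold `2` to the vertices of `A` and the
unreachable threshold `n + 1` to the others. On the configuration of `{i, j}` the only vertex that
can see two active vertices in its closed neighbourhood is `i`, and it does so iff the edge `ij` is
present; so the successor is the indicator of `i` on `R'` and zero on `R \ R'`.
-/

open scoped Classical

/-- The hypothesis class of threshold SyDSs over undirected graphs on n vertices. -/
def ThresholdClass (n : ℕ) : Set ((Fin n → Bool) → (Fin n → Bool)) :=
  {F | ∃ (G : SimpleGraph (Fin n)) (τ : Fin n → ℕ), ∀ C, F C = succF n G τ C}

/-- R is shattered by H in the Natarajan sense. -/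
def NShattered {X : Type*} (H : Set (X → X)) (R : Finset X) : Prop :=
  ∃ g1 g2 : X → X, (∀ C ∈ R, g1 C ≠ g2 C) ∧
    ∀ R' ⊆ R, ∃ F ∈ H, (∀ C ∈ R', F C = g1 C) ∧ ∀ C ∈ R, C ∉ R' → F C = g2 C

open Finset

theorem Nat.div_two_mul_sub_div_two (n : ℕ) : n / 2 * (n - n / 2) = n ^ 2 / 4 := by
  rcases Nat.even_or_odd' n with ⟨k, rfl | rfl⟩
  · rw [show 2 * k / 2 = k by omega, show 2 * k - k = k by omega,
      show (2 * k) ^ 2 = 4 * (k * k) by ring]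
    omega
  · rw [show (2 * k + 1) / 2 = k by omega, show 2 * k + 1 - k = k + 1 by omega,
      show (2 * k + 1) ^ 2 = 4 * (k * k + k) + 1 by ring, mul_add_one]
    omega

theorem Finset.two_le_card_filter_pair_iff {α : Type*} [DecidableEq α] {i j : α} (hij : i ≠ j)
    (p : α → Prop) [DecidablePred p] : 2 ≤ #(({i, j} : Finset α).filter p) ↔ p i ∧ p j := by
  rw [card_filter, sum_pair hij]
  split_ifs <;> simp_all

namespace ThresholdSyDS

variable {n : ℕ}

def pairConfig (i j : Fin n) : Fin n → Bool := fun v => decide (v = i ∨ v = j)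

theorem filter_pairConfig (p : Fin n → Prop) [DecidablePred p] (i j : Fin n) :
    univ.filter (fun u => p u ∧ pairConfig i j u = true) = ({i, j} : Finset (Fin n)).filter p := by
  ext u
  simp [pairConfig, and_comm]

def bipartiteGraph (A : Finset (Fin n)) (R' : Finset (Fin n → Bool)) : SimpleGraph (Fin n) :=
  SimpleGraph.fromRel fun u w => u ∈ A ∧ w ∉ A ∧ pairConfig u w ∈ R'

theorem not_bipartiteGraph_adj {A : Finset (Fin n)} (R' : Finset (Fin n → Bool)) {u w : Fin n}
    (hu : u ∈ A) (hw : w ∈ A) : ¬ (bipartiteGraph A R').Adj u w := by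
  simp [bipartiteGraph, hu, hw]

theorem bipartiteGraph_adj_iff {A : Finset (Fin n)} (R' : Finset (Fin n → Bool)) {u w : Fin n}
    (hu : u ∈ A) (hw : w ∉ A) : (bipartiteGraph A R').Adj u w ↔ pairConfig u w ∈ R' := by
  have : u ≠ w := by rintro rfl; exact hw hu
  simp [bipartiteGraph, hu, hw, this]

def threshold (A : Finset (Fin n)) : Fin n → ℕ := fun v => if v ∈ A then 2 else n + 1

theorem succF_pairConfig {A : Finset (Fin n)} (R' : Finset (Fin n → Bool)) {i j : Fin n}
    (hi : i ∈ A) (hj : j ∉ A) (v : Fin n) :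
    succF n (bipartiteGraph A R') (threshold A) (pairConfig i j) v =
      decide (v = i ∧ pairConfig i j ∈ R') := by
  have hij : i ≠ j := by rintro rfl; exact hj hi
  rw [succF, filter_pairConfig]
  by_cases hv : v ∈ A
  · rw [threshold, if_pos hv, decide_eq_decide, two_le_card_filter_pair_iff hij]
    have hjv : j ≠ v := by rintro rfl; exact hj hv
    simp only [not_bipartiteGraph_adj R' hv hi, bipartiteGraph_adj_iff R' hv hj, hjv, false_or,
      or_false]
    constructor <;> rintro ⟨rfl, h⟩ <;> exact ⟨rfl, h⟩
  · have hvi : v ≠ i := by rintro rfl; exact hv hi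
    simp only [threshold, if_neg hv, hvi, false_and, decide_false, decide_eq_false_iff_not, not_le]
    exact Nat.lt_succ_of_le ((card_le_univ _).trans_eq (Fintype.card_fin n))

def pairs (A : Finset (Fin n)) : Finset (Fin n → Bool) :=
  (A ×ˢ Aᶜ).image fun p => pairConfig p.1 p.2

theorem card_pairs (A : Finset (Fin n)) : #(pairs A) = #A * #Aᶜ := by
  rw [pairs, card_image_of_injOn, card_product]
  rintro ⟨i, j⟩ hp ⟨i', j'⟩ hq h
  simp only [coe_product, coe_compl, Set.mem_prod, mem_coe, Set.mem_compl_iff] at hp hq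
  have hi := congrFun h i
  have hj := congrFun h j
  simp only [pairConfig, decide_eq_decide, true_or, or_true, true_iff] at hi hj
  obtain rfl : i = i' := hi.resolve_right fun h => hq.2 (h ▸ hp.1)
  obtain rfl : j = j' := hj.resolve_left fun h => hp.2 (h ▸ hq.1)
  rfl

theorem nShattered_pairs (A : Finset (Fin n)) : NShattered (ThresholdClass n) (pairs A) := by
  have hF : ∀ C ∈ pairs A, ∃ i ∈ A, ∃ j ∉ A, C = pairConfig i j := by
    simp only [pairs, mem_image, mem_product, mem_compl, Prod.exists]
    rintro _ ⟨i, j, ⟨hi, hj⟩, rfl⟩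
    exact ⟨i, hi, j, hj, rfl⟩
  refine ⟨succF n (bipartiteGraph A (pairs A)) (threshold A),
    succF n (bipartiteGraph A ∅) (threshold A), ?_, fun R' hR' => ?_⟩
  · intro C hC h
    obtain ⟨i, hi, j, hj, rfl⟩ := hF C hC
    have := congrFun h i
    simp [succF_pairConfig _ hi hj, hC] at this
  · refine ⟨_, ⟨bipartiteGraph A R', threshold A, fun C => rfl⟩, fun C hC => ?_,
      fun C hC hC' => ?_⟩
    · obtain ⟨i, hi, j, hj, rfl⟩ := hF C (hR' hC)
      ext v
      simp [succF_pairConfig _ hi hj, hC, hR' hC]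
    · obtain ⟨i, hi, j, hj, rfl⟩ := hF C hC
      ext v
      simp [succF_pairConfig _ hi hj, hC']

end ThresholdSyDS

/-- The Natarajan dimension of the class of threshold SyDSs on n vertices
is at least ⌊n²/4⌋: there is a shattered set of that size. -/
theorem stmt16 (n : ℕ) :
    ∃ R : Finset (Fin n → Bool), R.card = n ^ 2 / 4 ∧
      NShattered (ThresholdClass n) R := by
  obtain ⟨A, -, hA⟩ := exists_subset_card_eq (s := (univ : Finset (Fin n)))
    (by simpa using Nat.div_le_self n 2)
  refine ⟨ThresholdSyDS.pairs A, ?_, ThresholdSyDS.nShattered_pairs A⟩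
  rw [ThresholdSyDS.card_pairs, card_compl, Fintype.card_fin, hA, Nat.div_two_mul_sub_div_two]
end

section
/- For real x with 1 ≤ x ≤ k ≤ n² and n ≥ 1, the function x ↦ (e²n²/x)^x = e^{2x·ln(en) - x·ln x} is such that its integral from 1 to k is at most c·e^{k·ln(e²n²/k)} for an absolute constant c; in particular Σ_{d=1}^{k} (e²n²/d)^d ≤ c'·(e²n²/k)^k for an absolute constant c' (whenever k ≤ n²). -/
open Real

lemma key19 (A k x : ℝ) (hx : 1 ≤ x) (hxk : x ≤ k) (hA0 : 0 < A)
    (hAlog : 2 + Real.log k ≤ Real.log A) :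
    (A / x) ^ x ≤ Real.exp (x - k) * Real.exp (k * Real.log (A / k)) := by
  have hx0 : 0 < x := by linarith
  have hk0 : 0 < k := by linarith
  rw [Real.rpow_def_of_pos (by positivity), ← Real.exp_add]
  apply Real.exp_le_exp.2
  rw [Real.log_div hA0.ne' hx0.ne', Real.log_div hA0.ne' hk0.ne']
  have h1 : x * (Real.log k - Real.log x) ≤ k - x := by
    have h := Real.log_le_sub_one_of_pos (show 0 < k / x by positivity)
    rw [Real.log_div hk0.ne' hx0.ne'] at h
    have := mul_le_mul_of_nonneg_left h (le_of_lt hx0)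
    calc x * (Real.log k - Real.log x) ≤ x * (k / x - 1) := this
      _ = k - x := by field_simp
  have h2 : (k - x) * (2 + Real.log k) ≤ (k - x) * Real.log A :=
    mul_le_mul_of_nonneg_left hAlog (by linarith)
  nlinarith [h1, h2]

/-- The integral ∫₁ᵏ (e²n²/x)^x dx is at most c·e^{k·ln(e²n²/k)} for an absolute
constant c, and consequently Σ_{d=1}^k (e²n²/d)^d ≤ c·(e²n²/k)^k, whenever
1 ≤ k ≤ n². -/
theorem stmt19 :
    ∃ c : ℝ, 0 < c ∧ ∀ n k : ℕ, 1 ≤ k → k ≤ n ^ 2 →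
      ((∫ x in (1 : ℝ)..(k : ℝ), (Real.exp 1 ^ 2 * (n : ℝ) ^ 2 / x) ^ x) ≤
          c * Real.exp (k * Real.log (Real.exp 1 ^ 2 * (n : ℝ) ^ 2 / k))) ∧
      ((∑ d ∈ Finset.Icc 1 k, (Real.exp 1 ^ 2 * (n : ℝ) ^ 2 / (d : ℝ)) ^ (d : ℝ)) ≤
          c * (Real.exp 1 ^ 2 * (n : ℝ) ^ 2 / (k : ℝ)) ^ (k : ℝ)) := by
  refine ⟨2, by norm_num, fun n k hk1 hk2 => ?_⟩
  set A : ℝ := Real.exp 1 ^ 2 * (n : ℝ) ^ 2 with hA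
  have hn1 : 1 ≤ n := by nlinarith [hk2, hk1]
  have hn0 : (0:ℝ) < (n:ℝ) := by exact_mod_cast hn1
  have hA0 : 0 < A := by positivity
  have hk0 : (0:ℝ) < (k:ℝ) := by exact_mod_cast hk1
  have hk1' : (1:ℝ) ≤ (k:ℝ) := by exact_mod_cast hk1
  have hkn : (k:ℝ) ≤ (n:ℝ)^2 := by exact_mod_cast hk2
  have hAlog : 2 + Real.log (k:ℝ) ≤ Real.log A := by
    have h1 : Real.log A = 2 + Real.log ((n:ℝ)^2) := by
      rw [hA, Real.log_mul (by positivity) (by positivity), ← Real.exp_nat_mul]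
      · simp [Real.log_exp]
    rw [h1]
    have := Real.log_le_log hk0 hkn
    linarith
  set C : ℝ := Real.exp (k * Real.log (A / k)) with hC
  have hC0 : 0 < C := Real.exp_pos _
  have hCeq : C = (A / (k:ℝ)) ^ (k:ℝ) := by
    rw [Real.rpow_def_of_pos (by positivity), mul_comm]
  constructor
  · -- integral part
    have hmono : (∫ x in (1:ℝ)..(k:ℝ), (A / x) ^ x) ≤
        ∫ x in (1:ℝ)..(k:ℝ), Real.exp (x - k) * C := by
      apply intervalIntegral.integral_mono_on hk1'
      · apply ContinuousOn.intervalIntegrable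
        apply ContinuousOn.rpow (continuousOn_const.div continuousOn_id ?_) continuousOn_id ?_
        · intro x hx
          rw [Set.uIcc_of_le hk1'] at hx
          have : (1:ℝ) ≤ x := hx.1
          positivity
        · intro x hx
          rw [Set.uIcc_of_le hk1'] at hx
          right
          simp only [id]
          linarith [hx.1]
      · apply ContinuousOn.intervalIntegrable
        exact ((Real.continuous_exp.comp (continuous_id.sub continuous_const)).mul
          continuous_const).continuousOn
      · intro x hx
        exact key19 A k x hx.1 hx.2 hA0 hAlog
    have hcalc : (∫ x in (1:ℝ)..(k:ℝ), Real.exp (x - k) * C) ≤ 2 * C := by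
      rw [intervalIntegral.integral_mul_const]
      have : (∫ x in (1:ℝ)..(k:ℝ), Real.exp (x - (k:ℝ))) =
          Real.exp ((k:ℝ) - k) - Real.exp (1 - k) := by
        rw [intervalIntegral.integral_comp_sub_right (fun x => Real.exp x) (k:ℝ)]
        simp [integral_exp]
      rw [this]
      have h1 : Real.exp ((k:ℝ) - k) - Real.exp (1 - k) ≤ 2 := by
        have := Real.exp_pos (1 - (k:ℝ))
        simp only [sub_self, Real.exp_zero]
        linarith
      nlinarith [hC0]
    exact le_trans hmono hcalc
  · -- sum part
    have hstep : (∑ d ∈ Finset.Icc 1 k, (A / (d:ℝ)) ^ (d:ℝ)) ≤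
        ∑ d ∈ Finset.Icc 1 k, Real.exp ((d:ℝ) - k) * C := by
      apply Finset.sum_le_sum
      intro d hd
      rw [Finset.mem_Icc] at hd
      exact key19 A k d (by exact_mod_cast hd.1) (by exact_mod_cast hd.2) hA0 hAlog
    have hgeom : (∑ d ∈ Finset.Icc 1 k, Real.exp ((d:ℝ) - k)) ≤ 2 := by
      have e1 : (1:ℝ) < Real.exp 1 := by
        have := Real.exp_one_gt_d9; linarith
      have hsum : (∑ d ∈ Finset.Icc 1 k, Real.exp ((d:ℝ) - k)) =
          (∑ d ∈ Finset.Icc 1 k, Real.exp 1 ^ d) * Real.exp (-(k:ℝ)) := by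
        rw [Finset.sum_mul]
        apply Finset.sum_congr rfl
        intro d _
        rw [Real.exp_one_pow, ← Real.exp_add]
        ring_nf
      rw [hsum]
      have hsub : (∑ d ∈ Finset.Icc 1 k, Real.exp 1 ^ d) ≤
          ∑ d ∈ Finset.range (k+1), Real.exp 1 ^ d := by
        apply Finset.sum_le_sum_of_subset_of_nonneg
        · intro d hd
          rw [Finset.mem_Icc] at hd
          rw [Finset.mem_range]
          omega
        · intro d _ _
          positivity
      have hgs : (∑ d ∈ Finset.range (k+1), Real.exp 1 ^ d) =
          (Real.exp 1 ^ (k+1) - 1) / (Real.exp 1 - 1) := geom_sum_eq (ne_of_gt e1) _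
      have hexpk : Real.exp 1 ^ (k+1) = Real.exp ((k:ℝ)+1) := by
        rw [Real.exp_one_pow]
        push_cast
        ring_nf
      have hbd : (Real.exp 1 ^ (k+1) - 1) / (Real.exp 1 - 1) * Real.exp (-(k:ℝ)) ≤ 2 := by
        rw [hexpk, div_mul_eq_mul_div, div_le_iff₀ (by linarith)]
        have h3 : Real.exp ((k:ℝ)+1) * Real.exp (-(k:ℝ)) = Real.exp 1 := by
          rw [← Real.exp_add]; ring_nf
        have h4 : (0:ℝ) < Real.exp (-(k:ℝ)) := Real.exp_pos _
        have h5 : (2:ℝ) < Real.exp 1 := by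
          have := Real.exp_one_gt_d9; linarith
        nlinarith
      calc (∑ d ∈ Finset.Icc 1 k, Real.exp 1 ^ d) * Real.exp (-(k:ℝ))
          ≤ (∑ d ∈ Finset.range (k+1), Real.exp 1 ^ d) * Real.exp (-(k:ℝ)) := by
            apply mul_le_mul_of_nonneg_right hsub (le_of_lt (Real.exp_pos _))
        _ = (Real.exp 1 ^ (k+1) - 1) / (Real.exp 1 - 1) * Real.exp (-(k:ℝ)) := by rw [hgs]
        _ ≤ 2 := hbd
    calc (∑ d ∈ Finset.Icc 1 k, (A / (d:ℝ)) ^ (d:ℝ))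
        ≤ ∑ d ∈ Finset.Icc 1 k, Real.exp ((d:ℝ) - k) * C := hstep
      _ = (∑ d ∈ Finset.Icc 1 k, Real.exp ((d:ℝ) - k)) * C := by rw [Finset.sum_mul]
      _ ≤ 2 * C := mul_le_mul_of_nonneg_right hgeom (le_of_lt hC0)
      _ = 2 * (A / (k:ℝ)) ^ (k:ℝ) := by rw [hCeq]
end
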